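/- arXiv:1010.4760 — 2 statements merged into one kernel-verified Lean document; each statement's English description precedes it below -/
import Mathlib

section
/- Let G be a deterministic first-order grammar, let E = E(x₁,…,xₙ) and F = F(x₁,…,xₙ) be regular terms, let T₁,…,Tₙ and T'₁,…,T'ₙ be ground regular terms, and let k ∈ ℕ. If E(T'₁,…,T'ₙ) ∼_k F(T'₁,…,T'ₙ) but E(T₁,…,Tₙ) ≁_k F(T₁,…,Tₙ), then some offending prefix for the pair (E(T₁,…,Tₙ), F(T₁,…,Tₙ)) exposes an equation for (E,F). -/
namespace FOGPaper

variable {S A : Type*}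

/-- Extension of the single-step transition relations to words. -/
def Steps (tr : A → S → S → Prop) : List A → S → S → Prop
  | [], s, t => t = s
  | a :: w, s, t => ∃ s', tr a s s' ∧ Steps tr w s' t

/-- The trace set of a state: the finite words it enables. -/
def traces (tr : A → S → S → Prop) (s : S) : Set (List A) :=
  {w | ∃ t, Steps tr w s t}

/-- The traces of length at most `k`. -/
def tracesLe (tr : A → S → S → Prop) (k : ℕ) (s : S) : Set (List A) :=
  {w ∈ traces tr s | w.length ≤ k}

/-- `r ∼ₖ s` : `r` and `s` enable the same words of length at most `k`. -/
def SimK (tr : A → S → S → Prop) (k : ℕ) (r s : S) : Prop :=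
  tracesLe tr k r = tracesLe tr k s

/-- `r ∼ s` : trace equivalence. -/
def Sim (tr : A → S → S → Prop) (r s : S) : Prop :=
  traces tr r = traces tr s

/-- The equivalence level in ℕ ∪ {ω}: the supremum of the `k` with `r ∼ₖ s`
(equal to `k` iff `r ∼ₖ s` and not `r ∼ₖ₊₁ s`, and to `ω = ⊤` iff `r ∼ s`). -/
noncomputable def eqLevel (tr : A → S → S → Prop) (r s : S) : ℕ∞ :=
  ⨆ k ∈ {k : ℕ | SimK tr k r s}, (k : ℕ∞)

/-- The offending words for `(r,s)` : the shortest words lying in exactly one of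
`traces r`, `traces s`. -/
def offWords (tr : A → S → S → Prop) (r s : S) : Set (List A) :=
  {w | w ∈ (traces tr r \ traces tr s) ∪ (traces tr s \ traces tr r) ∧
       ∀ v ∈ (traces tr r \ traces tr s) ∪ (traces tr s \ traces tr r),
         w.length ≤ v.length}

/-- A labelled transition system is deterministic if each `→ᵃ` is a partial function. -/
def IsDet (tr : A → S → S → Prop) : Prop :=
  ∀ a r s₁ s₂, tr a r s₁ → tr a r s₂ → s₁ = s₂

/-- The infinite traces (ω-words enabled in a state). -/
def omTraces (tr : A → S → S → Prop) (s : S) : Set (ℕ → A) :=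
  {α | ∃ f : ℕ → S, f 0 = s ∧ ∀ i, tr (α i) (f i) (f (i + 1))}

/-- Concatenation of a finite word with an infinite word. -/
def wApp (u : List A) (α : ℕ → A) : ℕ → A := fun i =>
  if h : i < u.length then u[i]'h else α (i - u.length)


/-- Possibly-infinite terms over nonterminals `N` (and variables `x₁, x₂, …`),
represented as partial labelling functions on positions (`Sum.inr i` is the
variable `xᵢ`). -/
abbrev Tm (N : Type*) := List ℕ → Option (N ⊕ ℕ)

/-- Arity of a label: nonterminals have their arity, variables have arity 0. -/
def arityOf {N : Type*} (arity : N → ℕ) : N ⊕ ℕ → ℕ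
  | Sum.inl X => arity X
  | Sum.inr _ => 0

/-- Well-formed term: the domain is nonempty (contains the root) and matches the
arities of the labels (which makes it prefix-closed). -/
def TmWF {N : Type*} (arity : N → ℕ) (E : Tm N) : Prop :=
  (E []).isSome ∧
    ∀ γ i, (E (γ ++ [i])).isSome ↔ ∃ v, E γ = some v ∧ 1 ≤ i ∧ i ≤ arityOf arity v

/-- The subterm (occurrence) of `E` at position `γ`. -/
def subAt {N : Type*} (E : Tm N) (γ : List ℕ) : Tm N := fun δ => E (γ ++ δ)

/-- A term is regular if it has only finitely many subterms. -/
def TmRegular {N : Type*} (E : Tm N) : Prop := (Set.range (subAt E)).Finite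

/-- A term is finite if its domain is finite. -/
def TmFinite {N : Type*} (E : Tm N) : Prop := {γ | (E γ).isSome}.Finite

/-- A term is ground if no variable occurs in it. -/
def TmGround {N : Type*} (E : Tm N) : Prop := ∀ γ i, E γ ≠ some (Sum.inr i)

/-- `E = E(x₁,…,xₙ)` : all variables occurring in `E` are among `x₁,…,xₙ`. -/
def VarsBdd {N : Type*} (n : ℕ) (E : Tm N) : Prop :=
  ∀ γ i, E γ = some (Sum.inr i) → 1 ≤ i ∧ i ≤ n

/-- The term consisting of the single variable `xᵢ`. -/
def varTm (N : Type*) (i : ℕ) : Tm N := fun γ => if γ = [] then some (Sum.inr i) else none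

open Classical in
/-- Substitution `E σ`: each occurrence of the variable `xᵢ` is replaced by `σ i`.
(For a well-formed `E`, the decomposition of a position through a variable
occurrence is unique, so the choice is canonical.) -/
noncomputable def subst {N : Type*} (E : Tm N) (σ : ℕ → Tm N) : Tm N := fun γ =>
  if h : ∃ p : List ℕ × ℕ × List ℕ, γ = p.1 ++ p.2.2 ∧ E p.1 = some (Sum.inr p.2.1)
  then σ h.choose.2.1 h.choose.2.2
  else E γ

/-- The term `X G₁ G₂ …` with root `X` and `i`-th child `Gs i`. -/
def node {N : Type*} (X : N) (Gs : ℕ → Tm N) : Tm N := fun γ =>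
  match γ with
  | [] => some (Sum.inl X)
  | i :: δ => Gs i δ

/-- A first-order grammar: ranked nonterminals and a finite set of root-rewriting
rules `X x₁ … xₘ →ᵃ E` where `E` is a finite term with variables among `x₁,…,xₘ`,
`m = arity X`. -/
structure FOG (N A : Type*) where
  arity : N → ℕ
  rules : Set (N × A × Tm N)
  rules_fin : rules.Finite
  rules_wf : ∀ r ∈ rules, TmFinite r.2.2 ∧ TmWF arity r.2.2 ∧ VarsBdd (arity r.1) r.2.2

/-- A grammar is deterministic: at most one rule for each pair `(X, a)`. -/
def FOG.Det {N A : Type*} (G : FOG N A) : Prop :=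
  ∀ X a E E', (X, a, E) ∈ G.rules → (X, a, E') ∈ G.rules → E = E'

/-- The transition relation of the LTS `L_G` generated by the grammar `G` on terms:
each rule `X x₁ … xₘ →ᵃ E` gives `X G₁ … Gₘ →ᵃ E(G₁,…,Gₘ)`. -/
def gstep {N A : Type*} (G : FOG N A) (a : A) (s t : Tm N) : Prop :=
  ∃ X E Gs, (X, a, E) ∈ G.rules ∧ s = node X Gs ∧ t = subst E Gs


/-! ### Auxiliary lemmas -/

section Aux

variable {N : Type*}

/-- Decomposition of `Steps` along an append. -/
theorem steps_append {tr : A → S → S → Prop} (u v : List A) (s t : S) :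
    Steps tr (u ++ v) s t ↔ ∃ m, Steps tr u s m ∧ Steps tr v m t := by
  induction u generalizing s with
  | nil =>
    constructor
    · intro h; exact ⟨s, rfl, h⟩
    · rintro ⟨m, rfl, h⟩; exact h
  | cons a u ih =>
    constructor
    · rintro ⟨s', h1, h2⟩
      obtain ⟨m, h2, h3⟩ := (ih s').mp h2
      exact ⟨m, ⟨s', h1, h2⟩, h3⟩
    · rintro ⟨m, ⟨s', h1, h2⟩, h3⟩
      exact ⟨s', h1, (ih s').mpr ⟨m, h2, h3⟩⟩

theorem steps_det {tr : A → S → S → Prop} (hdet : IsDet tr) :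
    ∀ {w : List A} {s t₁ t₂ : S}, Steps tr w s t₁ → Steps tr w s t₂ → t₁ = t₂ := by
  intro w
  induction w with
  | nil => intro s t₁ t₂ h1 h2; exact h1.trans h2.symm
  | cons a w ih =>
    rintro s t₁ t₂ ⟨s₁, hs₁, h1⟩ ⟨s₂, hs₂, h2⟩
    obtain rfl := hdet a s s₁ s₂ hs₁ hs₂
    exact ih h1 h2

/-- Well-formed terms have prefix-closed domains. -/
theorem wf_isSome_prefix {ar : N → ℕ} {E : Tm N} (hE : TmWF ar E) (γ : List ℕ) :
    ∀ δ, (E (γ ++ δ)).isSome → (E γ).isSome := by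
  intro δ
  induction δ using List.reverseRecOn with
  | nil => simp
  | append_singleton δ j ih =>
    intro h
    rw [← List.append_assoc] at h
    obtain ⟨v, hv, -⟩ := (hE.2 (γ ++ δ) j).mp h
    exact ih (by simp [hv])

/-- In a well-formed term, nothing sits strictly below a variable occurrence. -/
theorem wf_var_ext {ar : N → ℕ} {E : Tm N} (hE : TmWF ar E) {γ : List ℕ} {i : ℕ}
    (h : E γ = some (Sum.inr i)) {δ : List ℕ} (hδ : δ ≠ []) : E (γ ++ δ) = none := by
  cases δ with
  | nil => exact absurd rfl hδ
  | cons d δ' =>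
    by_contra hne
    have hs : (E (γ ++ d :: δ')).isSome := Option.isSome_iff_ne_none.mpr hne
    have h2 : (E (γ ++ [d])).isSome := by
      apply wf_isSome_prefix hE (γ ++ [d]) δ'
      rwa [List.append_assoc]
    obtain ⟨v, hv, h1, h2'⟩ := (hE.2 γ d).mp h2
    rw [h] at hv
    have hv' : v = Sum.inr i := (Option.some_inj.mp hv).symm
    subst hv'
    simp [arityOf] at h2'
    omega
/-- At most one variable occurrence of a well-formed term on a given branch. -/
theorem var_prefix_unique {ar : N → ℕ} {E : Tm N} (hE : TmWF ar E) {γ p q : List ℕ} {i j : ℕ}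
    (hp : p <+: γ) (hq : q <+: γ) (hpi : E p = some (Sum.inr i))
    (hqj : E q = some (Sum.inr j)) : p = q := by
  rcases List.prefix_or_prefix_of_prefix hp hq with h | h
  · obtain ⟨r, rfl⟩ := h
    rcases eq_or_ne r [] with rfl | hr
    · simp
    · rw [wf_var_ext hE hpi hr] at hqj; simp at hqj
  · obtain ⟨r, rfl⟩ := h
    rcases eq_or_ne r [] with rfl | hr
    · simp
    · rw [wf_var_ext hE hqj hr] at hpi; simp at hpi

/-- A well-formed term whose root is the variable `xᵢ` is `varTm N i`. -/
theorem var_root_eq {ar : N → ℕ} {E : Tm N} (hE : TmWF ar E) {i : ℕ}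
    (h : E [] = some (Sum.inr i)) : E = varTm N i := by
  funext γ
  cases γ with
  | nil => simpa [varTm] using h
  | cons d δ =>
    have h2 := wf_var_ext hE (γ := []) h (δ := d :: δ) (by simp)
    simpa [varTm] using h2

theorem subAt_wf {ar : N → ℕ} {E : Tm N} (hE : TmWF ar E) {γ : List ℕ}
    (h : (E γ).isSome) : TmWF ar (subAt E γ) := by
  refine ⟨by simpa [subAt] using h, fun δ i => ?_⟩
  have h2 := hE.2 (γ ++ δ) i
  simpa [subAt, List.append_assoc] using h2

theorem subAt_varsBdd {n : ℕ} {E : Tm N} (h : VarsBdd n E) (γ : List ℕ) :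
    VarsBdd n (subAt E γ) := fun δ i hδ => h (γ ++ δ) i hδ

theorem varTm_wf {ar : N → ℕ} (i : ℕ) : TmWF ar (varTm N i) := by
  constructor
  · simp [varTm]
  · intro γ j
    constructor
    · intro h
      rw [varTm] at h
      rw [if_neg (by simp)] at h
      simp at h
    · rintro ⟨v, hv, h1, h2⟩
      rcases eq_or_ne γ [] with rfl | h0
      · rw [varTm, if_pos rfl] at hv
        obtain rfl : v = Sum.inr i := Option.some_inj.mp hv.symm
        simp [arityOf] at h2
        omega
      · rw [varTm, if_neg h0] at hv
        simp at hv

theorem subst_of_no_var {E : Tm N} {σ : ℕ → Tm N} {γ : List ℕ}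
    (h : ∀ p i, p <+: γ → E p ≠ some (Sum.inr i)) : subst E σ γ = E γ := by
  simp only [subst]
  rw [dif_neg]
  rintro ⟨⟨p, i, q⟩, h1, h2⟩
  exact h p i ⟨q, h1.symm⟩ h2

theorem subst_of_var {ar : N → ℕ} {E : Tm N} (hE : TmWF ar E) {σ : ℕ → Tm N}
    {p q : List ℕ} {i : ℕ} (hp : E p = some (Sum.inr i)) :
    subst E σ (p ++ q) = σ i q := by
  have hc : ∃ pr : List ℕ × ℕ × List ℕ,
      p ++ q = pr.1 ++ pr.2.2 ∧ E pr.1 = some (Sum.inr pr.2.1) := ⟨(p, i, q), rfl, hp⟩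
  simp only [subst]
  rw [dif_pos hc]
  obtain ⟨h1, h2⟩ := hc.choose_spec
  have hpp : hc.choose.1 = p :=
    var_prefix_unique hE ⟨hc.choose.2.2, h1.symm⟩ ⟨q, rfl⟩ h2 hp
  have hq : hc.choose.2.2 = q := by
    rw [hpp] at h1
    exact (List.append_cancel_left h1).symm
  have hi : hc.choose.2.1 = i := by
    rw [hpp, hp] at h2
    exact (Sum.inr.inj (Option.some_inj.mp h2)).symm
  rw [hi, hq]

theorem subst_varTm (σ : ℕ → Tm N) (i : ℕ) : subst (varTm N i) σ = σ i := by
  funext γ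
  have h0 : varTm N i [] = some (Sum.inr i) := by simp [varTm]
  have h := subst_of_var (ar := fun _ => 0) (varTm_wf i) (σ := σ) (q := γ) h0
  simpa using h
theorem subst_node {ar : N → ℕ} {E : Tm N} (hE : TmWF ar E) {X : N}
    (hX : E [] = some (Sum.inl X)) (σ : ℕ → Tm N) :
    subst E σ = node X (fun j => subst (subAt E [j]) σ) := by
  funext γ
  cases γ with
  | nil =>
    rw [subst_of_no_var, hX]
    · rfl
    · intro p i hp hpi
      obtain rfl : p = [] := List.prefix_nil.mp hp
      rw [hX] at hpi
      simp at hpi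
  | cons j δ =>
    show subst E σ (j :: δ) = subst (subAt E [j]) σ δ
    by_cases hv : ∃ p i, p <+: (j :: δ) ∧ E p = some (Sum.inr i)
    · obtain ⟨p, i, hp, hpi⟩ := hv
      cases p with
      | nil => rw [hX] at hpi; simp at hpi
      | cons j' p₀ =>
        obtain ⟨rest, hrest⟩ := hp
        have hj : j = j' := by
          have := congrArg (fun l => l.headI) hrest
          simpa using this.symm
        subst hj
        have hδ : δ = p₀ ++ rest := by
          have : j :: (p₀ ++ rest) = j :: δ := hrest
          exact (List.cons_injective.eq_iff.mp this).symm
        have hsome : (E [j]).isSome := by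
          apply wf_isSome_prefix hE [j] p₀
          rw [show [j] ++ p₀ = j :: p₀ from rfl, hpi]
          simp
        have h1 : subst E σ (j :: δ) = σ i rest := by
          have h := subst_of_var hE (σ := σ) (q := rest) hpi
          rw [show (j :: p₀) ++ rest = j :: (p₀ ++ rest) from rfl] at h
          rw [hδ]; exact h
        have h2 : subst (subAt E [j]) σ δ = σ i rest := by
          have hpi' : subAt E [j] p₀ = some (Sum.inr i) := hpi
          have h := subst_of_var (subAt_wf hE hsome) (σ := σ) (q := rest) hpi'
          rw [hδ]; exact h
        rw [h1, h2]
    · push_neg at hv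
      rw [subst_of_no_var (fun p i hp => hv p i hp), subst_of_no_var]
      · rfl
      · intro p i hp
        obtain ⟨r, hr⟩ := hp
        exact hv (j :: p) i ⟨r, by rw [← hr]; rfl⟩
theorem prefix_snoc {α : Type*} {p γ : List α} {a : α} (h : p <+: γ ++ [a]) :
    p <+: γ ∨ p = γ ++ [a] := by
  obtain ⟨r, hr⟩ := h
  induction r using List.reverseRecOn with
  | nil => right; simpa using hr
  | append_singleton r b _ =>
    left
    rw [← List.append_assoc] at hr
    exact ⟨r, (List.append_inj' hr rfl).1⟩

theorem subst_wf {ar : N → ℕ} {E : Tm N} (hE : TmWF ar E) {τ : ℕ → Tm N}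
    (hτ : ∀ m γ, E γ = some (Sum.inr m) → TmWF ar (τ m)) : TmWF ar (subst E τ) := by
  constructor
  · rcases Option.isSome_iff_exists.mp hE.1 with ⟨v, hv⟩
    cases v with
    | inl X =>
      rw [subst_of_no_var]
      · simp [hv]
      · intro p i hp hpi
        obtain rfl : p = [] := List.prefix_nil.mp hp
        rw [hv] at hpi; simp at hpi
    | inr m =>
      have h := subst_of_var hE (σ := τ) (q := []) hv
      rw [List.nil_append] at h
      rw [h]
      exact (hτ m [] hv).1
  · intro γ i
    by_cases hv : ∃ p m, p <+: γ ∧ E p = some (Sum.inr m)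
    · obtain ⟨p, m, hp, hpm⟩ := hv
      obtain ⟨r, rfl⟩ := hp
      have e1 : subst E τ ((p ++ r) ++ [i]) = τ m (r ++ [i]) := by
        rw [List.append_assoc]; exact subst_of_var hE hpm
      have e2 : subst E τ (p ++ r) = τ m r := subst_of_var hE hpm
      rw [e1, e2]
      exact (hτ m p hpm).2 r i
    · push_neg at hv
      have e2 : subst E τ γ = E γ := subst_of_no_var (fun p m h => hv p m h)
      by_cases hvi : ∃ m, E (γ ++ [i]) = some (Sum.inr m)
      · obtain ⟨m, hm⟩ := hvi
        have e1 : subst E τ (γ ++ [i]) = τ m [] := by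
          have h := subst_of_var hE (σ := τ) (q := []) hm
          rwa [List.append_nil] at h
        rw [e1, e2]
        constructor
        · intro _
          exact (hE.2 γ i).mp (by rw [hm]; simp)
        · intro _
          exact (hτ m _ hm).1
      · push_neg at hvi
        have e1 : subst E τ (γ ++ [i]) = E (γ ++ [i]) := by
          apply subst_of_no_var
          intro p m hp hpm
          rcases prefix_snoc hp with h | rfl
          · exact hv p m h hpm
          · exact hvi m hpm
        rw [e1, e2]
        exact hE.2 γ i

theorem subst_varsBdd {n : ℕ} {E : Tm N} {τ : ℕ → Tm N}
    (hτ : ∀ m γ, E γ = some (Sum.inr m) → VarsBdd n (τ m)) :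
    VarsBdd n (subst E τ) := by
  intro γ i hγ
  by_cases hc : ∃ pr : List ℕ × ℕ × List ℕ,
      γ = pr.1 ++ pr.2.2 ∧ E pr.1 = some (Sum.inr pr.2.1)
  · simp only [subst] at hγ
    rw [dif_pos hc] at hγ
    exact hτ _ _ hc.choose_spec.2 _ _ hγ
  · simp only [subst] at hγ
    rw [dif_neg hc] at hγ
    exact absurd ⟨(γ, i, []), by simp, hγ⟩ hc

theorem subst_comp {ar : N → ℕ} {E : Tm N} (hE : TmWF ar E) {τ σ : ℕ → Tm N}
    (hτ : ∀ m γ, E γ = some (Sum.inr m) → TmWF ar (τ m)) :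
    subst (subst E τ) σ = subst E (fun m => subst (τ m) σ) := by
  have hwf : TmWF ar (subst E τ) := subst_wf hE hτ
  funext γ
  by_cases hv : ∃ p m, p <+: γ ∧ E p = some (Sum.inr m)
  · obtain ⟨p, m, hp, hpm⟩ := hv
    obtain ⟨r, rfl⟩ := hp
    have hr : subst E (fun m => subst (τ m) σ) (p ++ r) = subst (τ m) σ r :=
      subst_of_var hE hpm
    rw [hr]
    by_cases hv2 : ∃ r₁ v, r₁ <+: r ∧ τ m r₁ = some (Sum.inr v)
    · obtain ⟨r₁, v, hr₁, hr₁v⟩ := hv2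
      obtain ⟨r₂, rfl⟩ := hr₁
      have e1 : subst (τ m) σ (r₁ ++ r₂) = σ v r₂ := subst_of_var (hτ m p hpm) hr₁v
      have e2 : subst E τ (p ++ r₁) = τ m r₁ := subst_of_var hE hpm
      have e3 : subst (subst E τ) σ ((p ++ r₁) ++ r₂) = σ v r₂ :=
        subst_of_var hwf (by rw [e2]; exact hr₁v)
      rw [e1, ← List.append_assoc]
      exact e3
    · push_neg at hv2
      have e1 : subst (τ m) σ r = τ m r := subst_of_no_var (fun r₁ v h => hv2 r₁ v h)
      have e0 : ∀ p' v, p' <+: p ++ r → subst E τ p' ≠ some (Sum.inr v) := by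
        intro p' v hp' hval
        by_cases hq : ∃ q' m', q' <+: p' ∧ E q' = some (Sum.inr m')
        · obtain ⟨q', m', hq', hq'm⟩ := hq
          obtain rfl : p = q' := (var_prefix_unique hE (hq'.trans hp') ⟨r, rfl⟩ hq'm hpm).symm
          obtain ⟨r₁, rfl⟩ := hq'
          have hr₁r : r₁ <+: r := by
            obtain ⟨s, hs⟩ := hp'
            rw [List.append_assoc] at hs
            exact ⟨s, List.append_cancel_left hs⟩
          have e4 : subst E τ (p ++ r₁) = τ m r₁ := subst_of_var hE hpm
          rw [e4] at hval
          exact hv2 r₁ v hr₁r hval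
        · push_neg at hq
          rw [subst_of_no_var (fun q' m' h => hq q' m' h)] at hval
          exact hq p' v (List.prefix_refl _) hval
      rw [subst_of_no_var e0, e1]
      exact subst_of_var hE hpm
  · push_neg at hv
    have e0 : ∀ p' v, p' <+: γ → subst E τ p' ≠ some (Sum.inr v) := by
      intro p' v hp' hval
      by_cases hq : ∃ q' m', q' <+: p' ∧ E q' = some (Sum.inr m')
      · obtain ⟨q', m', hq', hq'm⟩ := hq
        exact hv q' m' (hq'.trans hp') hq'm
      · push_neg at hq
        rw [subst_of_no_var (fun q' m' h => hq q' m' h)] at hval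
        exact hq p' v (List.prefix_refl _) hval
    rw [subst_of_no_var e0, subst_of_no_var (fun p m h => hv p m h),
      subst_of_no_var (fun p m h => hv p m h)]
theorem node_inj {X Y : N} {Gs Hs : ℕ → Tm N} (h : node X Gs = node Y Hs) :
    X = Y ∧ Gs = Hs := by
  constructor
  · have h0 : (some (Sum.inl X) : Option (N ⊕ ℕ)) = some (Sum.inl Y) := congrFun h []
    exact Sum.inl.inj (Option.some_inj.mp h0)
  · funext j δ
    exact congrFun h (j :: δ)

theorem node_subAt {E : Tm N} {X : N} (h : E [] = some (Sum.inl X)) :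
    E = node X (fun j => subAt E [j]) := by
  funext γ
  cases γ with
  | nil => exact h
  | cons j δ => rfl

theorem gstep_det {A : Type*} {G : FOG N A} (hdet : G.Det) : IsDet (gstep G) := by
  rintro a r t₁ t₂ ⟨X, E₀, Gs, hr, rfl, rfl⟩ ⟨X', E₀', Gs', hr', heq, rfl⟩
  obtain ⟨rfl, rfl⟩ := node_inj heq
  rw [hdet X a E₀ E₀' hr hr']

theorem gstep_subst {A : Type*} {G : FOG N A} {n : ℕ} {a : A} {E E' : Tm N}
    (hE : TmWF G.arity E) (hvars : VarsBdd n E) (h : gstep G a E E') (σ : ℕ → Tm N) :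
    gstep G a (subst E σ) (subst E' σ) ∧ TmWF G.arity E' ∧ VarsBdd n E' := by
  obtain ⟨X, E₀, Gs, hrule, rfl, rfl⟩ := h
  have hroot : node X Gs [] = some (Sum.inl X) := rfl
  have hE₀ := G.rules_wf _ hrule
  have hτwf : ∀ m γ, E₀ γ = some (Sum.inr m) → TmWF G.arity (Gs m) := by
    intro m γ hm
    obtain ⟨h1, h2⟩ := hE₀.2.2 γ m hm
    have hsome : ((node X Gs) [m]).isSome :=
      (hE.2 [] m).mpr ⟨Sum.inl X, rfl, h1, h2⟩
    exact subAt_wf hE hsome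
  refine ⟨⟨X, E₀, fun j => subst (Gs j) σ, hrule, ?_, ?_⟩, ?_, ?_⟩
  · exact subst_node hE hroot σ
  · exact subst_comp hE₀.2.1 hτwf
  · exact subst_wf hE₀.2.1 hτwf
  · apply subst_varsBdd
    intro m γ _
    exact subAt_varsBdd hvars [m]

theorem gstep_subst_inv {A : Type*} {G : FOG N A} {a : A} {E t : Tm N} {σ : ℕ → Tm N}
    (hE : TmWF G.arity E) {X : N} (hroot : E [] = some (Sum.inl X))
    (h : gstep G a (subst E σ) t) :
    ∃ E', gstep G a E E' ∧ t = subst E' σ := by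
  obtain ⟨Y, E₀, Gs, hrule, hseq, rfl⟩ := h
  rw [subst_node hE hroot σ] at hseq
  obtain ⟨rfl, rfl⟩ := node_inj hseq
  have hE₀ := G.rules_wf _ hrule
  have hτwf : ∀ m γ, E₀ γ = some (Sum.inr m) → TmWF G.arity (subAt E [m]) := by
    intro m γ hm
    obtain ⟨h1, h2⟩ := hE₀.2.2 γ m hm
    exact subAt_wf hE ((hE.2 [] m).mpr ⟨Sum.inl X, hroot, h1, h2⟩)
  refine ⟨subst E₀ (fun j => subAt E [j]),
    ⟨X, E₀, fun j => subAt E [j], hrule, node_subAt hroot, rfl⟩, ?_⟩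
  exact (subst_comp hE₀.2.1 hτwf).symm

theorem steps_subst {A : Type*} {G : FOG N A} {n : ℕ} {u : List A} {E E' : Tm N}
    (hE : TmWF G.arity E) (hvars : VarsBdd n E)
    (h : Steps (gstep G) u E E') (σ : ℕ → Tm N) :
    Steps (gstep G) u (subst E σ) (subst E' σ) := by
  induction u generalizing E with
  | nil => rw [show E' = E from h]; rfl
  | cons a u ih =>
    obtain ⟨E₁, h1, h2⟩ := h
    obtain ⟨hg, hwf, hv⟩ := gstep_subst hE hvars h1 σ
    exact ⟨subst E₁ σ, hg, ih hwf hv h2⟩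

theorem steps_subst_inv {A : Type*} {G : FOG N A} {n : ℕ} {w : List A} {E t : Tm N}
    {σ : ℕ → Tm N} (hE : TmWF G.arity E) (hvars : VarsBdd n E)
    (h : Steps (gstep G) w (subst E σ) t) :
    (∃ E', Steps (gstep G) w E E' ∧ TmWF G.arity E' ∧ VarsBdd n E' ∧ t = subst E' σ) ∨
    (∃ u v i, w = u ++ v ∧ 1 ≤ i ∧ i ≤ n ∧ Steps (gstep G) u E (varTm N i) ∧
      Steps (gstep G) v (σ i) t) := by
  induction w generalizing E with
  | nil => exact Or.inl ⟨E, rfl, hE, hvars, h⟩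
  | cons a w ih =>
    obtain ⟨s', h1, h2⟩ := h
    rcases Option.isSome_iff_exists.mp hE.1 with ⟨v, hv⟩
    cases v with
    | inr i =>
      have hEv : E = varTm N i := var_root_eq hE hv
      right
      obtain ⟨hi1, hi2⟩ := hvars [] i hv
      refine ⟨[], a :: w, i, rfl, hi1, hi2, hEv.symm, ?_⟩
      have hs : subst E σ = σ i := by rw [hEv]; exact subst_varTm σ i
      rw [hs] at h1
      exact ⟨s', h1, h2⟩
    | inl X =>
      obtain ⟨E₁, hg, rfl⟩ := gstep_subst_inv hE hv h1
      obtain ⟨-, hwf1, hv1⟩ := gstep_subst hE hvars hg σ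
      rcases ih hwf1 hv1 h2 with ⟨E', h3, h4, h5, h6⟩ | ⟨u, v', i, rfl, hi1, hi2, h3, h4⟩
      · exact Or.inl ⟨E', ⟨E₁, hg, h3⟩, h4, h5, h6⟩
      · exact Or.inr ⟨a :: u, v', i, rfl, hi1, hi2, ⟨E₁, hg, h3⟩, h4⟩
/-- The heart of the argument: if `E(σ') ∼ₖ F(σ')` and `w` (of length at most `k`)
is a shortest word separating `E(σ)` from `F(σ)`, enabled on the `E` side, then some
prefix of `w` exposes an equation for `(E,F)`. -/
theorem core_exposes {A : Type*} (G : FOG N A) (hdet : G.Det) (n : ℕ) (E F : Tm N)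
    (hEwf : TmWF G.arity E) (hEvars : VarsBdd n E)
    (hFwf : TmWF G.arity F) (hFvars : VarsBdd n F)
    (σ σ' : ℕ → Tm N) (k : ℕ)
    (hsim : SimK (gstep G) k (subst E σ') (subst F σ'))
    (w : List A) (hwlen : w.length ≤ k)
    (hwE : w ∈ traces (gstep G) (subst E σ))
    (hwF : w ∉ traces (gstep G) (subst F σ))
    (hwmin : ∀ v : List A,
      v ∈ (traces (gstep G) (subst E σ) \ traces (gstep G) (subst F σ)) ∪
          (traces (gstep G) (subst F σ) \ traces (gstep G) (subst E σ)) →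
      w.length ≤ v.length) :
    ∃ u, u <+: w ∧ ∃ i H, 1 ≤ i ∧ i ≤ n ∧ H ≠ varTm N i ∧
      ((Steps (gstep G) u E (varTm N i) ∧ Steps (gstep G) u F H) ∨
       (Steps (gstep G) u F (varTm N i) ∧ Steps (gstep G) u E H)) := by
  classical
  have hsimEq : tracesLe (gstep G) k (subst E σ') = tracesLe (gstep G) k (subst F σ') := hsim
  have htrpre : ∀ (s : Tm N) (u v : List A),
      (u ++ v) ∈ traces (gstep G) s → u ∈ traces (gstep G) s := by
    rintro s u v ⟨t, ht⟩
    obtain ⟨m, h1, -⟩ := (steps_append u v s t).mp ht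
    exact ⟨m, h1⟩
  have hproper : ∀ u, u <+: w → u ≠ w → u ∈ traces (gstep G) (subst F σ) := by
    intro u hu hne
    by_contra hnot
    obtain ⟨v, rfl⟩ := hu
    have huE : u ∈ traces (gstep G) (subst E σ) := htrpre _ u v hwE
    have hlen := hwmin u (Or.inl ⟨huE, hnot⟩)
    rw [List.length_append] at hlen
    have hv0 : v = [] := List.length_eq_zero_iff.mp (by omega)
    exact hne (by rw [hv0, List.append_nil])
  by_cases hvar : ∃ m, m ≤ w.length ∧ ∃ i, 1 ≤ i ∧ i ≤ n ∧
      (Steps (gstep G) (w.take m) E (varTm N i) ∨ Steps (gstep G) (w.take m) F (varTm N i))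
  · -- some prefix of `w` reaches a variable at the term level
    obtain ⟨hm₀le, i, hi1, hi2, hsteps⟩ := Nat.find_spec hvar
    set u : List A := w.take (Nat.find hvar) with hu_def
    have hu : u <+: w := List.take_prefix _ _
    have hulen : u.length = Nat.find hvar := by
      rw [hu_def, List.length_take]; omega
    have hC2 : ∀ i', Steps (gstep G) u E (varTm N i') →
        Steps (gstep G) u F (varTm N i') → False := by
      intro i' hE' hF'
      have hEu : Steps (gstep G) u (subst E σ) (σ i') := by
        have h := steps_subst hEwf hEvars hE' σ
        rwa [subst_varTm] at h
      have hFu : Steps (gstep G) u (subst F σ) (σ i') := by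
        have h := steps_subst hFwf hFvars hF' σ
        rwa [subst_varTm] at h
      obtain ⟨vrest, hvrest⟩ := hu
      obtain ⟨t, ht⟩ := hwE
      rw [← hvrest] at ht
      obtain ⟨mid, hmid1, hmid2⟩ := (steps_append u vrest _ t).mp ht
      obtain rfl : mid = σ i' := steps_det (gstep_det hdet) hmid1 hEu
      apply hwF
      rw [← hvrest]
      exact ⟨t, (steps_append u vrest _ t).mpr ⟨σ i', hFu, hmid2⟩⟩
    have hminlt : ∀ (u₁ v₁ : List A) (j : ℕ), u₁ ++ v₁ = u → v₁ ≠ [] → 1 ≤ j → j ≤ n →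
        ¬ (Steps (gstep G) u₁ E (varTm N j) ∨ Steps (gstep G) u₁ F (varTm N j)) := by
      intro u₁ v₁ j hsplit hv₁ hj1 hj2 hstep
      have hlt : u₁.length < Nat.find hvar := by
        rw [← hulen, ← hsplit, List.length_append]
        have := List.length_pos_iff.mpr hv₁
        omega
      have hu₁ : u₁ <+: w := List.IsPrefix.trans ⟨v₁, hsplit⟩ hu
      apply Nat.find_min hvar hlt
      refine ⟨le_trans hu₁.length_le (le_refl _), j, hj1, hj2, ?_⟩
      rw [← List.prefix_iff_eq_take.mp hu₁]
      exact hstep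
    have hgetF : u ∈ traces (gstep G) (subst F σ) → ∃ H, Steps (gstep G) u F H := by
      rintro ⟨t, ht⟩
      rcases steps_subst_inv hFwf hFvars ht with ⟨F', hsF, -, -, -⟩ |
        ⟨u₁, v₁, j, hsplit, hj1, hj2, hsu, -⟩
      · exact ⟨F', hsF⟩
      · rcases eq_or_ne v₁ [] with rfl | hne
        · rw [List.append_nil] at hsplit
          exact ⟨varTm N j, by rw [hsplit]; exact hsu⟩
        · exact absurd (Or.inr hsu) (hminlt u₁ v₁ j hsplit.symm hne hj1 hj2)
    have hgetE : u ∈ traces (gstep G) (subst E σ) → ∃ H, Steps (gstep G) u E H := by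
      rintro ⟨t, ht⟩
      rcases steps_subst_inv hEwf hEvars ht with ⟨E', hsE, -, -, -⟩ |
        ⟨u₁, v₁, j, hsplit, hj1, hj2, hsu, -⟩
      · exact ⟨E', hsE⟩
      · rcases eq_or_ne v₁ [] with rfl | hne
        · rw [List.append_nil] at hsplit
          exact ⟨varTm N j, by rw [hsplit]; exact hsu⟩
        · exact absurd (Or.inl hsu) (hminlt u₁ v₁ j hsplit.symm hne hj1 hj2)
    rcases hsteps with hEvar | hFvar
    · by_cases hm : Nat.find hvar = w.length
      · -- here `u = w`; this contradicts `E(σ') ∼ₖ F(σ')`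
        exfalso
        have huw : u = w := by rw [hu_def, hm, List.take_length]
        rw [huw] at hEvar
        have hwE' : w ∈ traces (gstep G) (subst E σ') := by
          have h := steps_subst hEwf hEvars hEvar σ'
          rw [subst_varTm] at h
          exact ⟨σ' i, h⟩
        have hwF' : w ∉ traces (gstep G) (subst F σ') := by
          rintro ⟨t₂, ht₂⟩
          rcases steps_subst_inv hFwf hFvars ht₂ with ⟨F', hsF, -, -, -⟩ |
            ⟨u₁, v₁, j, hsplit, hj1, hj2, hsu, -⟩
          · exact hwF ⟨subst F' σ, steps_subst hFwf hFvars hsF σ⟩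
          · rcases eq_or_ne v₁ [] with rfl | hne
            · rw [List.append_nil] at hsplit
              apply hwF
              have h := steps_subst hFwf hFvars hsu σ
              rw [subst_varTm] at h
              exact ⟨σ j, by rw [hsplit]; exact h⟩
            · exact absurd (Or.inr hsu)
                (hminlt u₁ v₁ j (hsplit.symm.trans huw.symm) hne hj1 hj2)
        have h1 : w ∈ tracesLe (gstep G) k (subst E σ') := ⟨hwE', hwlen⟩
        rw [hsimEq] at h1
        exact hwF' h1.1
      · have hne : u ≠ w := by
          intro h
          apply hm
          rw [← hulen, h]
        obtain ⟨H, hFH⟩ := hgetF (hproper u hu hne)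
        by_cases hH : H = varTm N i
        · exact (hC2 i hEvar (hH ▸ hFH)).elim
        · exact ⟨u, hu, i, H, hi1, hi2, hH, Or.inl ⟨hEvar, hFH⟩⟩
    · have huE : u ∈ traces (gstep G) (subst E σ) := by
        obtain ⟨v, hv⟩ := hu
        rw [← hv] at hwE
        exact htrpre _ u v hwE
      obtain ⟨H, hEH⟩ := hgetE huE
      by_cases hH : H = varTm N i
      · exact (hC2 i (hH ▸ hEH) hFvar).elim
      · exact ⟨u, hu, i, H, hi1, hi2, hH, Or.inr ⟨hFvar, hEH⟩⟩
  · -- no prefix of `w` reaches a variable: contradiction with `E(σ') ∼ₖ F(σ')`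
    exfalso
    obtain ⟨t, ht⟩ := hwE
    rcases steps_subst_inv hEwf hEvars ht with ⟨E', hsE, -, -, -⟩ |
      ⟨u, v, i, rfl, hi1, hi2, hsu, -⟩
    · have hwE' : w ∈ traces (gstep G) (subst E σ') :=
        ⟨subst E' σ', steps_subst hEwf hEvars hsE σ'⟩
      have hwF' : w ∉ traces (gstep G) (subst F σ') := by
        rintro ⟨t₂, ht₂⟩
        rcases steps_subst_inv hFwf hFvars ht₂ with ⟨F', hsF, -, -, -⟩ |
          ⟨u, v, i, rfl, hi1, hi2, hsu, -⟩
        · exact hwF ⟨subst F' σ, steps_subst hFwf hFvars hsF σ⟩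
        · refine hvar ⟨u.length, ?_, i, hi1, hi2, Or.inr ?_⟩
          · rw [List.length_append]; omega
          · rwa [List.take_left]
      have h1 : w ∈ tracesLe (gstep G) k (subst E σ') := ⟨hwE', hwlen⟩
      rw [hsimEq] at h1
      exact hwF' h1.1
    · refine hvar ⟨u.length, ?_, i, hi1, hi2, Or.inl ?_⟩
      · rw [List.length_append]; omega
      · rwa [List.take_left]
end Aux


/-- for a deterministic grammar, if `E(T'₁,…,T'ₙ) ∼ₖ F(T'₁,…,T'ₙ)` but
`E(T₁,…,Tₙ) ≁ₖ F(T₁,…,Tₙ)`, then some offending prefix for `(E(T₁,…,Tₙ), F(T₁,…,Tₙ))`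
exposes an equation for `(E,F)`. -/
theorem offending_prefix_exposes_equation {N A : Type*} [Fintype N] [Fintype A]
    (G : FOG N A) (hdet : G.Det) (n : ℕ) (E F : Tm N)
    (hEreg : TmRegular E) (hEwf : TmWF G.arity E) (hEvars : VarsBdd n E)
    (hFreg : TmRegular F) (hFwf : TmWF G.arity F) (hFvars : VarsBdd n F)
    (σ σ' : ℕ → Tm N)
    (hσ : ∀ i, 1 ≤ i → i ≤ n → TmGround (σ i) ∧ TmRegular (σ i) ∧ TmWF G.arity (σ i))
    (hσ' : ∀ i, 1 ≤ i → i ≤ n → TmGround (σ' i) ∧ TmRegular (σ' i) ∧ TmWF G.arity (σ' i))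
    (k : ℕ)
    (hsim : SimK (gstep G) k (subst E σ') (subst F σ'))
    (hnsim : ¬ SimK (gstep G) k (subst E σ) (subst F σ)) :
    ∃ u : List A,
      (∃ w ∈ offWords (gstep G) (subst E σ) (subst F σ), u <+: w) ∧
      ∃ i H, 1 ≤ i ∧ i ≤ n ∧ H ≠ varTm N i ∧
        ((Steps (gstep G) u E (varTm N i) ∧ Steps (gstep G) u F H) ∨
         (Steps (gstep G) u F (varTm N i) ∧ Steps (gstep G) u E H)) := by
  classical
  obtain ⟨w₀, hw₀⟩ : ∃ w₀, ¬ (w₀ ∈ tracesLe (gstep G) k (subst E σ) ↔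
      w₀ ∈ tracesLe (gstep G) k (subst F σ)) := by
    by_contra h
    push_neg at h
    exact hnsim (Set.ext fun v => h v)
  have hw₀D : (w₀ ∈ (traces (gstep G) (subst E σ) \ traces (gstep G) (subst F σ)) ∪
      (traces (gstep G) (subst F σ) \ traces (gstep G) (subst E σ))) ∧ w₀.length ≤ k := by
    by_cases h1 : w₀ ∈ tracesLe (gstep G) k (subst E σ)
    · have h2 : w₀ ∉ tracesLe (gstep G) k (subst F σ) := fun h2 => hw₀ ⟨fun _ => h2, fun _ => h1⟩
      obtain ⟨h1a, h1b⟩ := h1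
      exact ⟨Or.inl ⟨h1a, fun hc => h2 ⟨hc, h1b⟩⟩, h1b⟩
    · have h2 : w₀ ∈ tracesLe (gstep G) k (subst F σ) := by
        by_contra h2
        exact hw₀ ⟨fun h => absurd h h1, fun h => absurd h h2⟩
      obtain ⟨h2a, h2b⟩ := h2
      exact ⟨Or.inr ⟨h2a, fun hc => h1 ⟨hc, h2b⟩⟩, h2b⟩
  obtain ⟨hw₀D, hw₀k⟩ := hw₀D
  have hexm : ∃ m, ∃ v : List A,
      (v ∈ (traces (gstep G) (subst E σ) \ traces (gstep G) (subst F σ)) ∪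
        (traces (gstep G) (subst F σ) \ traces (gstep G) (subst E σ))) ∧ v.length = m :=
    ⟨w₀.length, w₀, hw₀D, rfl⟩
  obtain ⟨w, hwD, hwlen'⟩ := Nat.find_spec hexm
  have hwmin : ∀ v, (v ∈ (traces (gstep G) (subst E σ) \ traces (gstep G) (subst F σ)) ∪
      (traces (gstep G) (subst F σ) \ traces (gstep G) (subst E σ))) →
      w.length ≤ v.length := by
    intro v hv
    rw [hwlen']
    exact Nat.find_min' hexm ⟨v, hv, rfl⟩
  have hwk : w.length ≤ k := le_trans (hwmin w₀ hw₀D) hw₀k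
  have hwoff : w ∈ offWords (gstep G) (subst E σ) (subst F σ) := ⟨hwD, hwmin⟩
  rcases hwD with ⟨hwE, hwF⟩ | ⟨hwF, hwE⟩
  · obtain ⟨u, hu, i, H, hi1, hi2, hH, hor⟩ :=
      core_exposes G hdet n E F hEwf hEvars hFwf hFvars σ σ' k hsim w hwk hwE hwF hwmin
    exact ⟨u, ⟨w, hwoff, hu⟩, i, H, hi1, hi2, hH, hor⟩
  · have hsim' : SimK (gstep G) k (subst F σ') (subst E σ') := (hsim : _ = _).symm
    have hwmin' : ∀ v, (v ∈ (traces (gstep G) (subst F σ) \ traces (gstep G) (subst E σ)) ∪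
        (traces (gstep G) (subst E σ) \ traces (gstep G) (subst F σ))) →
        w.length ≤ v.length := by
      intro v hv
      rcases hv with h | h
      · exact hwmin v (Or.inr h)
      · exact hwmin v (Or.inl h)
    obtain ⟨u, hu, i, H, hi1, hi2, hH, hor⟩ :=
      core_exposes G hdet n F E hFwf hFvars hEwf hEvars σ σ' k hsim' w hwk hwF hwE hwmin'
    exact ⟨u, ⟨w, hwoff, hu⟩, i, H, hi1, hi2, hH, hor.symm⟩

end FOGPaper
end

section
/- Let G be a deterministic first-order grammar over nonterminals N and let E = E(x₁,…,xₙ), F = F(x₁,…,xₙ) be regular terms over N. Extend G with fresh nullary nonterminals L₁,…,Lₙ (not occurring in E, F) and fresh pairwise distinct actions ℓ₁,…,ℓₙ, where the only rule for each L_i is L_i →^{ℓ_i} L_i (so L_i ≁₁ V for every term V ≠ L_i). Then for all ground regular terms T₁,…,Tₙ over N: eqlevel(E(L₁,…,Lₙ), F(L₁,…,Lₙ)) ≤ eqlevel(E(T₁,…,Tₙ), F(T₁,…,Tₙ)) in ℕ ∪ {ω}, computed in the LTS of the extended grammar. -/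
/-!
Fix `k` with `E(L) ∼ₖ F(L)` and a word `w` of length `≤ k` enabled by `E(T)`. Follow `w` in
`E(T)` and `E(L)` simultaneously. While the current residual `E'` of `E` has a nonterminal at
the root, both fire the same rule of the base grammar; by `∼ₖ` and determinism, `F(L)` fires
a rule with the same action, which is a base rule as well, so `F` has a residual `F'` moving in
lockstep. Once `E'` is a variable `xᵢ`, `E'(L) = Lᵢ` enables `ℓᵢ`, which nothing but `Lᵢ`
does, so `F' = xᵢ` as well and the rest of `w` is a trace of `Tᵢ = E'(T) = F'(T)`.
-/

namespace FOGPaper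

variable {S A : Type*}

/-- Renaming of nonterminals in a term. -/
def embTm {N M : Type*} (f : N → M) (E : Tm N) : Tm M :=
  fun γ => (E γ).map (Sum.map f id)

/-- The (ground, nullary) term `Lᵢ`, for a fresh nonterminal `Lᵢ = Sum.inr i`. -/
def constL (N : Type*) (n : ℕ) (i : Fin n) : Tm (N ⊕ Fin n) :=
  fun γ => if γ = [] then some (Sum.inl (Sum.inr i)) else none

/-- The substitution `[L₁/x₁, …, Lₙ/xₙ]` producing the critical instance. -/
def sigmaL (N : Type*) (n : ℕ) : ℕ → Tm (N ⊕ Fin n) := fun j =>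
  if h : 1 ≤ j ∧ j ≤ n then constL N n ⟨j - 1, by omega⟩ else varTm (N ⊕ Fin n) j


section Traces

variable {tr : A → S → S → Prop}

lemma nil_mem_traces (s : S) : [] ∈ traces tr s := ⟨s, rfl⟩

lemma cons_mem_traces {a : A} {w : List A} {s : S} :
    a :: w ∈ traces tr s ↔ ∃ s', tr a s s' ∧ w ∈ traces tr s' :=
  ⟨fun ⟨t, s', h, hs⟩ => ⟨s', h, t, hs⟩, fun ⟨s', h, t, hs⟩ => ⟨t, s', h, hs⟩⟩

lemma singleton_mem_traces {a : A} {s s' : S} (h : tr a s s') : [a] ∈ traces tr s :=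
  cons_mem_traces.mpr ⟨s', h, nil_mem_traces s'⟩

lemma IsDet.cons_mem_traces_iff (hdet : IsDet tr) {a : A} {s s' : S} (h : tr a s s')
    {w : List A} : a :: w ∈ traces tr s ↔ w ∈ traces tr s' := by
  rw [cons_mem_traces]
  refine ⟨fun ⟨s'', h'', hw⟩ => hdet a s s'' s' h'' h ▸ hw, fun hw => ⟨s', h, hw⟩⟩

lemma simK_iff {k : ℕ} {r s : S} :
    SimK tr k r s ↔ ∀ u : List A, u.length ≤ k → (u ∈ traces tr r ↔ u ∈ traces tr s) := by
  simp only [SimK, tracesLe, Set.ext_iff, Set.mem_ofPred_eq]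
  exact forall_congr' fun u => ⟨fun h hu => by simpa [hu] using h, fun h => by
    by_cases hu : u.length ≤ k <;> simp [hu, h]⟩

lemma SimK.mem_traces_iff {k : ℕ} {r s : S} (h : SimK tr k r s) {u : List A}
    (hu : u.length ≤ k) : u ∈ traces tr r ↔ u ∈ traces tr s :=
  simK_iff.mp h u hu

lemma SimK.symm {k : ℕ} {r s : S} (h : SimK tr k r s) : SimK tr k s r :=
  simK_iff.mpr fun _ hu => (h.mem_traces_iff hu).symm

lemma SimK.mono {j k : ℕ} {r s : S} (h : SimK tr k r s) (hjk : j ≤ k) : SimK tr j r s :=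
  simK_iff.mpr fun _ hu => h.mem_traces_iff (hu.trans hjk)

lemma SimK.of_step (hdet : IsDet tr) {k : ℕ} {a : A} {r r' s s' : S}
    (h : SimK tr (k + 1) r s) (hr : tr a r r') (hs : tr a s s') : SimK tr k r' s' :=
  simK_iff.mpr fun u hu => by
    rw [← hdet.cons_mem_traces_iff hr, ← hdet.cons_mem_traces_iff hs]
    exact h.mem_traces_iff (by simpa using hu)

lemma eqLevel_le_eqLevel {B : Type*} {tr' : A → B → B → Prop} {r s : S} {r' s' : B}
    (h : ∀ k, SimK tr k r s → SimK tr' k r' s') : eqLevel tr r s ≤ eqLevel tr' r' s' :=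
  iSup₂_le fun k hk => le_biSup (fun k : ℕ => (k : ℕ∞)) (h k hk)

end Traces

section Terms

variable {N : Type*}

/-- Makes the decomposition of a position of `subst E σ` through a variable occurrence unique. -/
def VarsPrefixFree (E : Tm N) : Prop :=
  ∀ β₁ δ₁ j₁ β₂ δ₂ j₂, β₁ ++ δ₁ = β₂ ++ δ₂ →
    E β₁ = some (Sum.inr j₁) → E β₂ = some (Sum.inr j₂) → β₁ = β₂

lemma subst_append_of_var {E : Tm N} (hE : VarsPrefixFree E) {β : List ℕ} {j : ℕ}
    (h : E β = some (Sum.inr j)) (σ : ℕ → Tm N) (δ : List ℕ) :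
    subst E σ (β ++ δ) = σ j δ := by
  have hex : ∃ p : List ℕ × ℕ × List ℕ, β ++ δ = p.1 ++ p.2.2 ∧ E p.1 = some (Sum.inr p.2.1) :=
    ⟨(β, j, δ), rfl, h⟩
  obtain ⟨happ, hvar⟩ := hex.choose_spec
  have hβ : hex.choose.1 = β := hE _ _ _ _ _ _ happ.symm hvar h
  rw [hβ] at happ hvar
  have hj : hex.choose.2.1 = j := by simpa [h, eq_comm] using hvar
  rw [subst, dif_pos hex, hj, List.append_cancel_left happ.symm]

lemma subst_of_forall_ne_var {E : Tm N} {γ : List ℕ} (σ : ℕ → Tm N)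
    (h : ∀ β δ j, γ = β ++ δ → E β ≠ some (Sum.inr j)) : subst E σ γ = E γ :=
  dif_neg fun ⟨_, happ, hvar⟩ => h _ _ _ happ hvar

lemma subst_nil {E : Tm N} (σ : ℕ → Tm N) (h : ∀ j, E [] ≠ some (Sum.inr j)) :
    subst E σ [] = E [] :=
  subst_of_forall_ne_var σ fun β δ j hβ => by
    rw [(List.append_eq_nil_iff.mp hβ.symm).1]; exact h j

lemma subst_cases (E : Tm N) (σ : ℕ → Tm N) (γ : List ℕ) :
    (∃ β j δ, γ = β ++ δ ∧ E β = some (Sum.inr j) ∧ subst E σ γ = σ j δ) ∨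
      (subst E σ γ = E γ ∧ ∀ β δ j, γ = β ++ δ → E β ≠ some (Sum.inr j)) := by
  by_cases h : ∃ p : List ℕ × ℕ × List ℕ, γ = p.1 ++ p.2.2 ∧ E p.1 = some (Sum.inr p.2.1)
  · obtain ⟨happ, hvar⟩ := h.choose_spec
    exact .inl ⟨_, _, _, happ, hvar, dif_pos h⟩
  · exact .inr ⟨dif_neg h, fun β δ j happ hvar => h ⟨(β, j, δ), happ, hvar⟩⟩

lemma subst_eq_var_iff {E : Tm N} (hE : VarsPrefixFree E) (σ : ℕ → Tm N) (γ : List ℕ)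
    (j : ℕ) : subst E σ γ = some (Sum.inr j) ↔
      ∃ β q δ, γ = β ++ δ ∧ E β = some (Sum.inr q) ∧ σ q δ = some (Sum.inr j) := by
  constructor
  · intro h
    rcases subst_cases E σ γ with ⟨β, q, δ, hγ, hvar, hval⟩ | ⟨hval, hnone⟩
    · exact ⟨β, q, δ, hγ, hvar, hval ▸ h⟩
    · exact absurd (hval ▸ h) (hnone γ [] j (List.append_nil γ).symm)
  · rintro ⟨β, q, δ, rfl, hvar, hσ⟩
    rw [subst_append_of_var hE hvar σ δ, hσ]

lemma subst_eq_of_root_var {E : Tm N} (hE : VarsPrefixFree E) {i : ℕ}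
    (hroot : E [] = some (Sum.inr i)) (σ : ℕ → Tm N) : subst E σ = σ i :=
  funext (subst_append_of_var hE hroot σ)

lemma VarsPrefixFree.subAt {E : Tm N} (hE : VarsPrefixFree E) (γ : List ℕ) :
    VarsPrefixFree (subAt E γ) := fun β₁ δ₁ _ β₂ δ₂ _ happ h₁ h₂ =>
  List.append_cancel_left (hE (γ ++ β₁) δ₁ _ (γ ++ β₂) δ₂ _ (by simp [happ]) h₁ h₂)

lemma VarsPrefixFree.subst {E : Tm N} {σ : ℕ → Tm N} (hE : VarsPrefixFree E)
    (hσ : ∀ q, VarsPrefixFree (σ q)) : VarsPrefixFree (subst E σ) := by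
  intro β₁ δ₁ j₁ β₂ δ₂ j₂ happ h₁ h₂
  obtain ⟨b₁, q₁, d₁, rfl, hv₁, hσ₁⟩ := (subst_eq_var_iff hE σ β₁ j₁).mp h₁
  obtain ⟨b₂, q₂, d₂, rfl, hv₂, hσ₂⟩ := (subst_eq_var_iff hE σ β₂ j₂).mp h₂
  simp only [List.append_assoc] at happ
  obtain rfl := hE _ _ _ _ _ _ happ hv₁ hv₂
  obtain rfl : q₁ = q₂ := by simpa [hv₁] using hv₂
  rw [hσ q₁ _ _ _ _ _ _ (List.append_cancel_left happ) hσ₁ hσ₂]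

lemma subst_subst {E : Tm N} {σ : ℕ → Tm N} (hE : VarsPrefixFree E)
    (hσ : ∀ q, VarsPrefixFree (σ q)) (ρ : ℕ → Tm N) :
    subst (subst E σ) ρ = subst E (fun q => subst (σ q) ρ) := by
  funext γ
  rcases subst_cases (subst E σ) ρ γ with ⟨β, j, δ, rfl, hvar, hval⟩ | ⟨hval, hnone⟩
  · obtain ⟨b, q, d, rfl, hvb, hσd⟩ := (subst_eq_var_iff hE σ β j).mp hvar
    rw [hval, List.append_assoc, subst_append_of_var hE hvb, subst_append_of_var (hσ q) hσd]
  · rw [hval]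
    rcases subst_cases E σ γ with ⟨b, q, d, rfl, hvb, hval'⟩ | ⟨hval', hnone'⟩
    · rw [hval', subst_append_of_var hE hvb]
      refine (subst_of_forall_ne_var ρ fun d₀ d₁ j hd hvar => ?_).symm
      refine hnone (b ++ d₀) d₁ j (by rw [hd, List.append_assoc]) ?_
      rwa [subst_append_of_var hE hvb]
    · rw [hval', subst_of_forall_ne_var _ hnone']

lemma subAt_subst_singleton {E : Tm N} (hE : VarsPrefixFree E)
    (hroot : ∀ j, E [] ≠ some (Sum.inr j)) (σ : ℕ → Tm N) (i : ℕ) :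
    subAt (subst E σ) [i] = subst (subAt E [i]) σ := by
  funext δ
  change subst E σ (i :: δ) = _
  rcases subst_cases E σ (i :: δ) with ⟨β, j, δ', hγ, hvar, hval⟩ | ⟨hval, hnone⟩
  · cases β with
    | nil => exact absurd hvar (hroot j)
    | cons b β' =>
      obtain ⟨hb, rfl⟩ := List.cons_eq_cons.mp hγ
      subst hb
      rw [hval]
      exact (subst_append_of_var (hE.subAt [i]) hvar σ δ').symm
  · rw [hval]
    refine (subst_of_forall_ne_var (E := subAt E [i]) σ fun β' ρ j hd hvar => ?_).symm
    exact hnone (i :: β') ρ j (by rw [hd]; rfl) hvar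

lemma TmWF.eq_none_append {ar : N → ℕ} {E : Tm N} (hwf : TmWF ar E) {γ : List ℕ}
    (hγ : E γ = none) (δ : List ℕ) : E (γ ++ δ) = none := by
  induction δ using List.reverseRecOn with
  | nil => simpa using hγ
  | append_singleton δ i ih =>
    rw [← List.append_assoc, ← Option.not_isSome_iff_eq_none, hwf.2]
    simp [ih]

lemma TmWF.varsPrefixFree {ar : N → ℕ} {E : Tm N} (hwf : TmWF ar E) : VarsPrefixFree E := by
  have leaf : ∀ β ρ j, E β = some (Sum.inr j) → (E (β ++ ρ)).isSome → ρ = [] := by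
    intro β ρ j hvar hsome
    cases ρ with
    | nil => rfl
    | cons i ρ =>
      have hchild : E (β ++ [i]) = none := by
        rw [← Option.not_isSome_iff_eq_none, hwf.2]
        simp [hvar, arityOf]
        omega
      have hnone := hwf.eq_none_append hchild ρ
      simp only [List.append_assoc, List.singleton_append] at hnone
      simp [hnone] at hsome
  intro β₁ δ₁ j₁ β₂ δ₂ j₂ happ h₁ h₂
  rcases List.prefix_or_prefix_of_prefix (happ ▸ List.prefix_append β₁ δ₁ :)
      (List.prefix_append β₂ δ₂) with ⟨ρ, rfl⟩ | ⟨ρ, rfl⟩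
  · rw [leaf β₁ ρ j₁ h₁ (by simp [h₂]), List.append_nil]
  · rw [leaf β₂ ρ j₂ h₂ (by simp [h₁]), List.append_nil]

lemma embTm_eq_var_iff {M : Type*} (f : N → M) (E : Tm N) (γ : List ℕ) (j : ℕ) :
    embTm f E γ = some (Sum.inr j) ↔ E γ = some (Sum.inr j) := by
  rcases h : E γ with _ | _ | _ <;> simp [embTm, h]

lemma embTm_ne_inr {M : Type*} (E : Tm N) (γ : List ℕ) (m : M) :
    embTm (Sum.inl : N → N ⊕ M) E γ ≠ some (Sum.inl (Sum.inr m)) := by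
  rcases h : E γ with _ | _ | _ <;> simp [embTm, h]

lemma VarsPrefixFree.embTm {M : Type*} (f : N → M) {E : Tm N} (hE : VarsPrefixFree E) :
    VarsPrefixFree (embTm f E) := fun β₁ δ₁ _ β₂ δ₂ _ happ h₁ h₂ =>
  hE β₁ δ₁ _ β₂ δ₂ _ happ ((embTm_eq_var_iff f E _ _).mp h₁) ((embTm_eq_var_iff f E _ _).mp h₂)

end Terms

lemma FOG.varsPrefixFree_of_mem_rules {N A : Type*} (G : FOG N A) {X : N} {a : A} {B : Tm N}
    (h : (X, a, B) ∈ G.rules) : VarsPrefixFree B :=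
  (G.rules_wf _ h).2.1.varsPrefixFree

lemma gstep_iff {N A : Type*} {G : FOG N A} {a : A} {s t : Tm N} :
    gstep G a s t ↔ ∃ X B, (X, a, B) ∈ G.rules ∧ s [] = some (Sum.inl X) ∧
      t = subst B (fun i => subAt s [i]) := by
  constructor
  · rintro ⟨X, B, Gs, hr, rfl, rfl⟩
    exact ⟨X, B, hr, rfl, rfl⟩
  · rintro ⟨X, B, hr, hs, rfl⟩
    refine ⟨X, B, fun i => subAt s [i], hr, funext fun γ => ?_, rfl⟩
    cases γ with
    | nil => exact hs
    | cons i δ => rfl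

section Extension

variable {N A : Type*} {n : ℕ} {G : FOG N A} {G' : FOG (N ⊕ Fin n) (A ⊕ Fin n)}

variable (n G) in
abbrev extRules : Set ((N ⊕ Fin n) × (A ⊕ Fin n) × Tm (N ⊕ Fin n)) :=
  ((fun r : N × A × Tm N =>
      ((Sum.inl r.1 : N ⊕ Fin n), ((Sum.inl r.2.1 : A ⊕ Fin n), embTm Sum.inl r.2.2)))
    '' G.rules) ∪
  (Set.range fun i : Fin n => ((Sum.inr i : N ⊕ Fin n), ((Sum.inr i : A ⊕ Fin n), constL N n i)))

lemma mem_extRules_iff {Z : N ⊕ Fin n} {a : A ⊕ Fin n} {B : Tm (N ⊕ Fin n)} :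
    (Z, a, B) ∈ extRules n G ↔
      (∃ X a₀ B₀, (X, a₀, B₀) ∈ G.rules ∧ Z = Sum.inl X ∧ a = Sum.inl a₀ ∧
        B = embTm Sum.inl B₀) ∨
      ∃ i, Z = Sum.inr i ∧ a = Sum.inr i ∧ B = constL N n i := by
  simp [Prod.ext_iff, eq_comm]

lemma isDet_gstep_ext (hdet : G.Det) (hrules : G'.rules = extRules n G) :
    IsDet (gstep G') := by
  intro a s t₁ t₂ h₁ h₂
  obtain ⟨Z, B₁, hr₁, hs₁, rfl⟩ := gstep_iff.mp h₁
  obtain ⟨Z', B₂, hr₂, hs₂, rfl⟩ := gstep_iff.mp h₂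
  obtain rfl : Z = Z' := by simpa [hs₁] using hs₂
  rw [hrules, mem_extRules_iff] at hr₁ hr₂
  rcases hr₁ with ⟨X, a₀, C₁, hC₁, rfl, rfl, rfl⟩ | ⟨i, rfl, rfl, rfl⟩
  · rcases hr₂ with ⟨X', a₀', C₂, hC₂, hX, ha, rfl⟩ | ⟨_, h, -, -⟩
    · obtain rfl := Sum.inl_injective hX
      obtain rfl := Sum.inl_injective ha
      rw [hdet X a₀ C₁ C₂ hC₁ hC₂]
    · cases h
  · rcases hr₂ with ⟨_, _, _, -, h, -, -⟩ | ⟨i', hi, -, rfl⟩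
    · cases h
    · obtain rfl := Sum.inr_injective hi
      rfl

lemma gstep_constL (hrules : G'.rules = extRules n G) (i : Fin n) :
    gstep G' (Sum.inr i) (constL N n i) (constL N n i) := by
  refine gstep_iff.mpr ⟨Sum.inr i, constL N n i, ?_, rfl, funext fun γ => ?_⟩
  · rw [hrules, mem_extRules_iff]
    exact .inr ⟨i, rfl, rfl, rfl⟩
  · refine (subst_of_forall_ne_var _ fun β δ j _ => ?_).symm
    by_cases hβ : β = [] <;> simp [constL, hβ]

lemma eq_inr_of_gstep_constL (hrules : G'.rules = extRules n G) {i : Fin n} {a : A ⊕ Fin n}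
    {t : Tm (N ⊕ Fin n)} (h : gstep G' a (constL N n i) t) : a = Sum.inr i := by
  obtain ⟨Z, B, hr, hs, -⟩ := gstep_iff.mp h
  obtain rfl : Z = Sum.inr i := by simpa [constL, eq_comm] using hs
  rw [hrules, mem_extRules_iff] at hr
  rcases hr with ⟨_, _, _, -, h, -⟩ | ⟨i', hi, rfl, -⟩
  · cases h
  · obtain rfl := Sum.inr_injective hi
    rfl

lemma root_eq_of_gstep_inr (hrules : G'.rules = extRules n G) {i : Fin n}
    {s t : Tm (N ⊕ Fin n)} (h : gstep G' (Sum.inr i) s t) :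
    s [] = some (Sum.inl (Sum.inr i)) := by
  obtain ⟨Z, B, hr, hs, -⟩ := gstep_iff.mp h
  rw [hrules, mem_extRules_iff] at hr
  rcases hr with ⟨_, _, _, -, -, h, -⟩ | ⟨i', rfl, hi, -⟩
  · cases h
  · obtain rfl := Sum.inr_injective hi
    exact hs

/-- The invariant shared by `E`, `F` and all their residuals under rules of the base grammar. -/
structure IsBaseTm (n : ℕ) (H : Tm (N ⊕ Fin n)) : Prop where
  varsPrefixFree : VarsPrefixFree H
  varsBdd : VarsBdd n H
  ne_fresh : ∀ γ i, H γ ≠ some (Sum.inl (Sum.inr i))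

lemma isBaseTm_embTm {ar : N → ℕ} {E : Tm N} (hwf : TmWF ar E) (hvars : VarsBdd n E) :
    IsBaseTm n (embTm Sum.inl E) where
  varsPrefixFree := hwf.varsPrefixFree.embTm Sum.inl
  varsBdd γ j h := hvars γ j ((embTm_eq_var_iff _ _ _ _).mp h)
  ne_fresh := embTm_ne_inr E

noncomputable def fireRoot (B : Tm N) (H : Tm (N ⊕ Fin n)) : Tm (N ⊕ Fin n) :=
  subst (embTm Sum.inl B) (fun i => subAt H [i])

lemma IsBaseTm.fireRoot {H : Tm (N ⊕ Fin n)} (hH : IsBaseTm n H) {B : Tm N}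
    (hB : VarsPrefixFree B) : IsBaseTm n (fireRoot B H) where
  varsPrefixFree := (hB.embTm Sum.inl).subst fun q => hH.varsPrefixFree.subAt [q]
  varsBdd γ j h := by
    obtain ⟨β, q, δ, -, -, hq⟩ := (subst_eq_var_iff (hB.embTm Sum.inl) _ γ j).mp h
    exact hH.varsBdd _ j hq
  ne_fresh γ i h := by
    rcases subst_cases (embTm Sum.inl B) (fun i => subAt H [i]) γ with
      ⟨β, q, δ, -, -, hval⟩ | ⟨hval, -⟩
    · rw [FOGPaper.fireRoot, hval] at h
      exact hH.ne_fresh _ i h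
    · rw [FOGPaper.fireRoot, hval] at h
      exact embTm_ne_inr B γ i h

lemma gstep_subst_iff (hrules : G'.rules = extRules n G) {H : Tm (N ⊕ Fin n)}
    (hH : VarsPrefixFree H) {X : N} (hroot : H [] = some (Sum.inl (Sum.inl X)))
    (σ : ℕ → Tm (N ⊕ Fin n)) {a : A ⊕ Fin n} {t : Tm (N ⊕ Fin n)} :
    gstep G' a (subst H σ) t ↔
      ∃ a₀ B, (X, a₀, B) ∈ G.rules ∧ a = Sum.inl a₀ ∧ t = subst (fireRoot B H) σ := by
  have hnv : ∀ j, H [] ≠ some (Sum.inr j) := by simp [hroot]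
  have hfire : ∀ {a₀ B}, (X, a₀, B) ∈ G.rules →
      subst (embTm Sum.inl B) (fun i => subAt (subst H σ) [i]) = subst (fireRoot B H) σ :=
    fun hr => by
      simp only [subAt_subst_singleton hH hnv, fireRoot]
      rw [subst_subst ((G.varsPrefixFree_of_mem_rules hr).embTm Sum.inl)
        fun q => hH.subAt [q]]
  rw [gstep_iff, subst_nil σ hnv, hroot]
  constructor
  · rintro ⟨Z, B, hr, hZ, rfl⟩
    rw [hrules, mem_extRules_iff] at hr
    rcases hr with ⟨X', a₀, B₀, hr, rfl, rfl, rfl⟩ | ⟨i, rfl, -, -⟩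
    · obtain rfl : X = X' := by simpa using hZ
      exact ⟨a₀, B₀, hr, rfl, hfire hr⟩
    · simp at hZ
  · rintro ⟨a₀, B, hr, rfl, rfl⟩
    refine ⟨Sum.inl X, embTm Sum.inl B, ?_, rfl, (hfire hr).symm⟩
    rw [hrules, mem_extRules_iff]
    exact .inl ⟨X, a₀, B, hr, rfl, rfl, rfl⟩

lemma subst_sigmaL_of_root_var {H : Tm (N ⊕ Fin n)} (hH : VarsPrefixFree H) {j : ℕ}
    (hroot : H [] = some (Sum.inr j)) (hj1 : 1 ≤ j) (hjn : j ≤ n) :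
    subst H (sigmaL N n) = constL N n ⟨j - 1, by omega⟩ := by
  rw [subst_eq_of_root_var hH hroot, sigmaL, dif_pos ⟨hj1, hjn⟩]

lemma root_ne_none_of_gstep {H : Tm (N ⊕ Fin n)} {σ : ℕ → Tm (N ⊕ Fin n)} {a : A ⊕ Fin n}
    {t : Tm (N ⊕ Fin n)} (h : gstep G' a (subst H σ) t) : H [] ≠ none := by
  intro hroot
  obtain ⟨Z, B, -, hs, -⟩ := gstep_iff.mp h
  rw [subst_nil σ (by simp [hroot]), hroot] at hs
  cases hs

lemma IsBaseTm.root_cases {H : Tm (N ⊕ Fin n)} (hH : IsBaseTm n H) (hne : H [] ≠ none) :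
    (∃ X, H [] = some (Sum.inl (Sum.inl X))) ∨
      ∃ j, 1 ≤ j ∧ j ≤ n ∧ H [] = some (Sum.inr j) := by
  rcases hroot : H [] with _ | (X | i) | j
  · exact absurd hroot hne
  · exact .inl ⟨X, rfl⟩
  · exact absurd hroot (hH.ne_fresh [] i)
  · exact .inr ⟨j, (hH.varsBdd [] j hroot).1, (hH.varsBdd [] j hroot).2, rfl⟩

lemma IsBaseTm.root_eq_var_of_gstep_inr (hrules : G'.rules = extRules n G)
    {H : Tm (N ⊕ Fin n)} (hH : IsBaseTm n H) {i : Fin n} {t : Tm (N ⊕ Fin n)}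
    (h : gstep G' (Sum.inr i) (subst H (sigmaL N n)) t) :
    H [] = some (Sum.inr ((i : ℕ) + 1)) := by
  have hs := root_eq_of_gstep_inr hrules h
  rcases hH.root_cases (root_ne_none_of_gstep h) with ⟨X, hX⟩ | ⟨j, hj1, hjn, hj⟩
  · rw [subst_nil _ (by simp [hX]), hX] at hs
    cases hs
  · rw [subst_sigmaL_of_root_var hH.varsPrefixFree hj hj1 hjn] at hs
    obtain rfl : (⟨j - 1, _⟩ : Fin n) = i := by simpa [constL] using hs
    rw [hj, Nat.sub_add_cancel hj1]

lemma IsBaseTm.exists_root_of_gstep_inl (hrules : G'.rules = extRules n G)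
    {H : Tm (N ⊕ Fin n)} (hH : IsBaseTm n H) {a₀ : A} {t : Tm (N ⊕ Fin n)}
    (h : gstep G' (Sum.inl a₀) (subst H (sigmaL N n)) t) :
    ∃ X, H [] = some (Sum.inl (Sum.inl X)) := by
  refine (hH.root_cases (root_ne_none_of_gstep h)).resolve_right ?_
  rintro ⟨j, hj1, hjn, hj⟩
  rw [subst_sigmaL_of_root_var hH.varsPrefixFree hj hj1 hjn] at h
  cases eq_inr_of_gstep_constL hrules h

lemma mem_traces_subst_of_simK (hdet : G.Det) (hrules : G'.rules = extRules n G)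
    (σ : ℕ → Tm (N ⊕ Fin n)) (w : List (A ⊕ Fin n)) {HE HF : Tm (N ⊕ Fin n)}
    (hE : IsBaseTm n HE) (hF : IsBaseTm n HF)
    (hsim : SimK (gstep G') w.length (subst HE (sigmaL N n)) (subst HF (sigmaL N n)))
    (hw : w ∈ traces (gstep G') (subst HE σ)) : w ∈ traces (gstep G') (subst HF σ) := by
  induction w generalizing HE HF with
  | nil => exact nil_mem_traces _
  | cons a w ih =>
    obtain ⟨t, hstep, hw⟩ := cons_mem_traces.mp hw
    rcases hE.root_cases (root_ne_none_of_gstep hstep) with ⟨X, hX⟩ | ⟨j, hj1, hjn, hj⟩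
    · obtain ⟨a₀, B, hr, rfl, rfl⟩ := (gstep_subst_iff hrules hE.varsPrefixFree hX σ).mp hstep
      have hEL := (gstep_subst_iff hrules hE.varsPrefixFree hX (sigmaL N n)).mpr
        ⟨a₀, B, hr, rfl, rfl⟩
      obtain ⟨_, hFL, -⟩ := cons_mem_traces.mp
        ((hsim.mem_traces_iff (by simp)).mp (singleton_mem_traces hEL))
      obtain ⟨Y, hY⟩ := hF.exists_root_of_gstep_inl hrules hFL
      obtain ⟨_, B', hr', ha, rfl⟩ := (gstep_subst_iff hrules hF.varsPrefixFree hY _).mp hFL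
      obtain rfl := Sum.inl_injective ha
      refine cons_mem_traces.mpr ⟨_,
        (gstep_subst_iff hrules hF.varsPrefixFree hY σ).mpr ⟨a₀, B', hr', rfl, rfl⟩, ?_⟩
      exact ih (hE.fireRoot (G.varsPrefixFree_of_mem_rules hr))
        (hF.fireRoot (G.varsPrefixFree_of_mem_rules hr'))
        (hsim.of_step (isDet_gstep_ext hdet hrules) hEL hFL) hw
    · have hEL : gstep G' (Sum.inr ⟨j - 1, by omega⟩) (subst HE (sigmaL N n))
          (constL N n ⟨j - 1, by omega⟩) := by
        rw [subst_sigmaL_of_root_var hE.varsPrefixFree hj hj1 hjn]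
        exact gstep_constL hrules _
      obtain ⟨_, hFL, -⟩ := cons_mem_traces.mp
        ((hsim.mem_traces_iff (by simp)).mp (singleton_mem_traces hEL))
      have hFj : HF [] = some (Sum.inr j) := by
        simpa [Nat.sub_add_cancel hj1] using hF.root_eq_var_of_gstep_inr hrules hFL
      rw [subst_eq_of_root_var hF.varsPrefixFree hFj,
        ← subst_eq_of_root_var hE.varsPrefixFree hj σ]
      exact cons_mem_traces.mpr ⟨t, hstep, hw⟩

lemma simK_subst_of_simK_sigmaL (hdet : G.Det) (hrules : G'.rules = extRules n G)
    {HE HF : Tm (N ⊕ Fin n)} (hE : IsBaseTm n HE) (hF : IsBaseTm n HF)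
    (σ : ℕ → Tm (N ⊕ Fin n)) {k : ℕ}
    (hsim : SimK (gstep G') k (subst HE (sigmaL N n)) (subst HF (sigmaL N n))) :
    SimK (gstep G') k (subst HE σ) (subst HF σ) :=
  simK_iff.mpr fun u hu =>
    ⟨mem_traces_subst_of_simK hdet hrules σ u hE hF (hsim.mono hu),
      mem_traces_subst_of_simK hdet hrules σ u hF hE (hsim.symm.mono hu)⟩

end Extension

theorem critical_instance_least_eqLevel_general {N A : Type}
    (G : FOG N A) (hdet : G.Det) (n : ℕ) (E F : Tm N)
    (hEwf : TmWF G.arity E) (hEvars : VarsBdd n E)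
    (hFwf : TmWF G.arity F) (hFvars : VarsBdd n F)
    (G' : FOG (N ⊕ Fin n) (A ⊕ Fin n))
    (hrules : G'.rules =
      ((fun r : N × A × Tm N =>
          ((Sum.inl r.1 : N ⊕ Fin n),
            ((Sum.inl r.2.1 : A ⊕ Fin n), embTm (Sum.inl : N → N ⊕ Fin n) r.2.2)))
        '' G.rules) ∪
      (Set.range fun i : Fin n =>
        ((Sum.inr i : N ⊕ Fin n), ((Sum.inr i : A ⊕ Fin n), constL N n i))))
    (τ : ℕ → Tm N) :
    eqLevel (gstep G')
        (subst (embTm Sum.inl E) (sigmaL N n))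
        (subst (embTm Sum.inl F) (sigmaL N n)) ≤
      eqLevel (gstep G')
        (subst (embTm Sum.inl E) (fun j => embTm Sum.inl (τ j)))
        (subst (embTm Sum.inl F) (fun j => embTm Sum.inl (τ j))) :=
  eqLevel_le_eqLevel fun _ =>
    simK_subst_of_simK_sigmaL hdet hrules (isBaseTm_embTm hEwf hEvars)
      (isBaseTm_embTm hFwf hFvars) _

/-- the critical instance `(E(L₁,…,Lₙ), F(L₁,…,Lₙ))`, obtained by extending
the grammar with fresh nullary nonterminals `Lᵢ` having the single rule `Lᵢ →^{ℓᵢ} Lᵢ`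
for fresh actions `ℓᵢ`, has the least eq-level among all ground instances
`(E(T₁,…,Tₙ), F(T₁,…,Tₙ))`. -/
theorem critical_instance_least_eqLevel {N A : Type} [Fintype N] [Fintype A]
    (G : FOG N A) (hdet : G.Det) (n : ℕ) (E F : Tm N)
    (hEreg : TmRegular E) (hEwf : TmWF G.arity E) (hEvars : VarsBdd n E)
    (hFreg : TmRegular F) (hFwf : TmWF G.arity F) (hFvars : VarsBdd n F)
    (G' : FOG (N ⊕ Fin n) (A ⊕ Fin n))
    (harity : G'.arity = Sum.elim G.arity fun _ => 0)
    (hrules : G'.rules =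
      ((fun r : N × A × Tm N =>
          ((Sum.inl r.1 : N ⊕ Fin n),
            ((Sum.inl r.2.1 : A ⊕ Fin n), embTm (Sum.inl : N → N ⊕ Fin n) r.2.2)))
        '' G.rules) ∪
      (Set.range fun i : Fin n =>
        ((Sum.inr i : N ⊕ Fin n), ((Sum.inr i : A ⊕ Fin n), constL N n i))))
    (τ : ℕ → Tm N)
    (hτ : ∀ j, 1 ≤ j → j ≤ n → TmGround (τ j) ∧ TmRegular (τ j) ∧ TmWF G.arity (τ j)) :
    eqLevel (gstep G')
        (subst (embTm Sum.inl E) (sigmaL N n))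
        (subst (embTm Sum.inl F) (sigmaL N n)) ≤
      eqLevel (gstep G')
        (subst (embTm Sum.inl E) (fun j => embTm Sum.inl (τ j)))
        (subst (embTm Sum.inl F) (fun j => embTm Sum.inl (τ j))) :=
  critical_instance_least_eqLevel_general G hdet n E F hEwf hEvars hFwf hFvars G' hrules τ

end FOGPaper
end
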